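/- The function h(t) = -log(t/tan t)/t² = (log(tan t) - log t)/t² is strictly increasing on (0, π/2). -/

import Mathlib

/-!
Writing `h(t) = log (tan t / t) / t²`, one finds `t³ h'(t) = t / (sin t cos t) - 1 - 2 log (tan t / t)`.
Since `log y < y - 1` for `y = tan t / t ≠ 1`, it suffices that `t / (sin t cos t) + 1 ≥ 2 tan t / t`,
i.e. `P t := t² + t sin t cos t - 2 sin² t ≥ 0`. Now `P 0 = 0` and `P' = Q` with
`Q t := 3t - 2t sin² t - 3 sin t cos t`, while `Q 0 = 0` and `Q' t = 4 sin t (sin t - t cos t) ≥ 0`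
because `tan t > t` on `(0, π/2)`.
-/

open Real Set

lemma le_of_hasDerivAt_nonneg_on_Ioo {f f' : ℝ → ℝ} {a b x : ℝ}
    (hf : ∀ y, HasDerivAt f (f' y) y) (hf' : ∀ y ∈ Ioo a b, 0 ≤ f' y) (hx : x ∈ Ico a b) :
    f a ≤ f x := by
  have hmono : MonotoneOn f (Ico a b) := by
    refine monotoneOn_of_hasDerivWithinAt_nonneg (convex_Ico a b)
      (fun y _ => (hf y).continuousAt.continuousWithinAt) (fun y _ => (hf y).hasDerivWithinAt) ?_
    rwa [interior_Ico]
  exact hmono (left_mem_Ico.2 (hx.1.trans_lt hx.2)) hx hx.1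

lemma mul_cos_lt_sin {t : ℝ} (h0 : 0 < t) (h1 : t < π / 2) : t * cos t < sin t := by
  have hcos : 0 < cos t := cos_pos_of_mem_Ioo ⟨by linarith [pi_pos], h1⟩
  have htan := lt_tan h0 h1
  rwa [tan_eq_sin_div_cos, lt_div_iff₀ hcos] at htan

lemma hasDerivAt_sin_mul_cos (t : ℝ) :
    HasDerivAt (fun t => sin t * cos t) (cos t ^ 2 - sin t ^ 2) t :=
  ((hasDerivAt_sin t).mul (hasDerivAt_cos t)).congr_deriv (by ring)

lemma hasDerivAt_sin_sq (t : ℝ) :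
    HasDerivAt (fun t => sin t ^ 2) (2 * (sin t * cos t)) t :=
  ((hasDerivAt_sin t).pow 2).congr_deriv (by push_cast; ring)

lemma three_mul_sub_two_mul_sin_sq_sub_three_mul_sin_mul_cos_nonneg {t : ℝ} (h0 : 0 ≤ t)
    (h1 : t < π / 2) : 0 ≤ 3 * t - 2 * t * sin t ^ 2 - 3 * (sin t * cos t) := by
  have hderiv (y : ℝ) : HasDerivAt (fun t => 3 * t - 2 * t * sin t ^ 2 - 3 * (sin t * cos t))
      (4 * sin y * (sin y - y * cos y)) y := by
    refine ((((hasDerivAt_id' y).const_mul 3).sub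
      (((hasDerivAt_id' y).const_mul 2).mul (hasDerivAt_sin_sq y))).sub
      ((hasDerivAt_sin_mul_cos y).const_mul 3)).congr_deriv ?_
    linear_combination (-3 : ℝ) * sin_sq_add_cos_sq y
  have hderiv_nonneg (y : ℝ) (hy : y ∈ Ioo 0 (π / 2)) : 0 ≤ 4 * sin y * (sin y - y * cos y) := by
    have hsin : 0 < sin y := sin_pos_of_pos_of_lt_pi hy.1 (by linarith [pi_pos, hy.2])
    have := mul_cos_lt_sin hy.1 hy.2
    positivity
  simpa using le_of_hasDerivAt_nonneg_on_Ioo hderiv hderiv_nonneg ⟨h0, h1⟩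

lemma two_mul_sin_sq_le {t : ℝ} (h0 : 0 ≤ t) (h1 : t < π / 2) :
    2 * sin t ^ 2 ≤ t ^ 2 + t * (sin t * cos t) := by
  have hderiv (y : ℝ) : HasDerivAt (fun t => t ^ 2 + t * (sin t * cos t) - 2 * sin t ^ 2)
      (3 * y - 2 * y * sin y ^ 2 - 3 * (sin y * cos y)) y := by
    refine (((hasDerivAt_pow 2 y).add ((hasDerivAt_id' y).mul (hasDerivAt_sin_mul_cos y))).sub
      ((hasDerivAt_sin_sq y).const_mul 2)).congr_deriv ?_
    push_cast
    linear_combination y * sin_sq_add_cos_sq y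
  simpa [sub_nonneg] using le_of_hasDerivAt_nonneg_on_Ioo hderiv
    (fun y hy => three_mul_sub_two_mul_sin_sq_sub_three_mul_sin_mul_cos_nonneg hy.1.le hy.2)
    ⟨h0, h1⟩

lemma two_mul_log_tan_div_lt {t : ℝ} (h0 : 0 < t) (h1 : t < π / 2) :
    2 * log (tan t / t) < t / (sin t * cos t) - 1 := by
  have hcos : 0 < cos t := cos_pos_of_mem_Ioo ⟨by linarith [pi_pos], h1⟩
  have hsin : 0 < sin t := sin_pos_of_pos_of_lt_pi h0 (by linarith [pi_pos])
  have hratio : 1 < tan t / t := (one_lt_div h0).2 (lt_tan h0 h1)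
  have hlog := log_lt_sub_one_of_pos (zero_lt_one.trans hratio) hratio.ne'
  have hgap : t / (sin t * cos t) + 1 - 2 * (tan t / t)
      = (t ^ 2 + t * (sin t * cos t) - 2 * sin t ^ 2) / (t * (sin t * cos t)) := by
    rw [tan_eq_sin_div_cos]
    field_simp
  have hgap_nonneg : 0 ≤ (t ^ 2 + t * (sin t * cos t) - 2 * sin t ^ 2) / (t * (sin t * cos t)) :=
    div_nonneg (by linarith [two_mul_sin_sq_le h0.le h1]) (by positivity)
  linarith

lemma hasDerivAt_neg_log_div_tan_div_sq {t : ℝ} (h0 : 0 < t) (h1 : t < π / 2) :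
    HasDerivAt (fun t => -log (t / tan t) / t ^ 2)
      ((t / (sin t * cos t) - 1 - 2 * log (tan t / t)) / t ^ 3) t := by
  have hcos : 0 < cos t := cos_pos_of_mem_Ioo ⟨by linarith [pi_pos], h1⟩
  have hsin : 0 < sin t := sin_pos_of_pos_of_lt_pi h0 (by linarith [pi_pos])
  have htan : 0 < tan t := tan_pos_of_pos_of_lt_pi_div_two h0 h1
  have hquot := (hasDerivAt_id' t).div (hasDerivAt_tan hcos.ne') htan.ne'
  refine (((hasDerivAt_log (div_pos h0 htan).ne').comp t hquot).neg.div
    (hasDerivAt_pow 2 t) (by positivity)).congr_deriv ?_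
  simp only [Function.comp_apply, Pi.div_apply, Pi.neg_apply]
  rw [log_div h0.ne' htan.ne', log_div htan.ne' h0.ne', tan_eq_sin_div_cos]
  field_simp
  ring

theorem stmt_18 :
    StrictMonoOn (fun t : ℝ => -Real.log (t / Real.tan t) / t^2) (Set.Ioo 0 (Real.pi/2)) := by
  refine strictMonoOn_of_hasDerivWithinAt_pos (convex_Ioo _ _)
    (fun t ht => (hasDerivAt_neg_log_div_tan_div_sq ht.1 ht.2).continuousAt.continuousWithinAt)
    (f' := fun t => (t / (sin t * cos t) - 1 - 2 * log (tan t / t)) / t ^ 3) ?_ ?_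
  · rw [interior_Ioo]
    exact fun t ht => (hasDerivAt_neg_log_div_tan_div_sq ht.1 ht.2).hasDerivWithinAt
  · rw [interior_Ioo]
    intro t ⟨h0, h1⟩
    have := two_mul_log_tan_div_lt h0 h1
    exact div_pos (by linarith) (by positivity)
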